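/- arXiv:1503.04617 — 2 statements merged into one kernel-verified Lean document; each statement's English description precedes it below -/
import Mathlib

section
/- Every finite bicolored tree with equally many black and white vertices (a balanced tree) has at least one white leaf and at least one black leaf. -/
/-!
Every edge has exactly one endpoint of each colour, so the degrees of the vertices of either
colour add up to the number of edges, which in a tree is one less than the number of vertices.
In a balanced tree each colour class holds half of the vertices, so if all of them had degree at
least two, that degree sum would reach the number of vertices.
-/

open Finset

namespace SimpleGraph

variable {V : Type*} {G : SimpleGraph V}

theorem isBipartiteWith_of_bool_coloring [Fintype V] {c : V → Bool}
    (hc : ∀ v w, G.Adj v w → c v ≠ c w) :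
    G.IsBipartiteWith ↑(univ.filter fun v => c v = true) ↑(univ.filter fun v => c v = false) where
  disjoint := by
    rw [disjoint_coe, disjoint_filter]
    simp
  mem_of_adj v w hvw := by
    have := hc v w hvw
    cases hv : c v <;> cases hw : c w <;> simp_all

theorem IsBipartiteWith.exists_degree_le_one_of_card_edgeFinset_lt [Fintype V]
    [DecidableRel G.Adj] {s t : Finset V} (h : G.IsBipartiteWith s t)
    (hs : #G.edgeFinset < 2 * #s) : ∃ v ∈ s, G.degree v ≤ 1 := by
  by_contra! hdeg
  have hsum : #s • 2 ≤ ∑ v ∈ s, G.degree v := card_nsmul_le_sum s _ 2 hdeg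
  rw [isBipartiteWith_sum_degrees_eq_card_edges h, smul_eq_mul] at hsum
  omega

end SimpleGraph

theorem balanced_tree_has_white_and_black_leaf_general
    {V : Type*} [Fintype V]
    (G : SimpleGraph V) [DecidableRel G.Adj]
    (hconn : G.Connected) (hacyc : G.IsAcyclic)
    (c : V → Bool)
    (hproper : ∀ v w, G.Adj v w → c v ≠ c w)
    (hbal : (Finset.univ.filter fun v => c v = true).card =
      (Finset.univ.filter fun v => c v = false).card) :
    (∃ v, G.degree v ≤ 1 ∧ c v = true) ∧ (∃ v, G.degree v ≤ 1 ∧ c v = false) := by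
  have hbip := SimpleGraph.isBipartiteWith_of_bool_coloring hproper
  have hcard : #(univ.filter fun v => c v = true) + #(univ.filter fun v => c v = false) =
      Fintype.card V := by
    simpa using card_filter_add_card_filter_not (s := univ) fun v => c v = true
  have hedges : #G.edgeFinset + 1 = Fintype.card V :=
    SimpleGraph.IsTree.card_edgeFinset ⟨hconn, hacyc⟩
  obtain ⟨v, hv, hv_leaf⟩ := hbip.exists_degree_le_one_of_card_edgeFinset_lt (by omega)
  obtain ⟨w, hw, hw_leaf⟩ := hbip.symm.exists_degree_le_one_of_card_edgeFinset_lt (by omega)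
  exact ⟨⟨v, hv_leaf, (mem_filter.1 hv).2⟩, ⟨w, hw_leaf, (mem_filter.1 hw).2⟩⟩

/-- Every finite bicolored tree (connected acyclic graph with a proper
2-coloring, `true` = white, `false` = black) with equally many black and white vertices
has at least one white leaf and at least one black leaf (a leaf is a vertex of degree ≤ 1). -/
theorem balanced_tree_has_white_and_black_leaf
    {V : Type*} [Fintype V] [DecidableEq V]
    (G : SimpleGraph V) [DecidableRel G.Adj]
    (hconn : G.Connected) (hacyc : G.IsAcyclic)
    (c : V → Bool)
    (hproper : ∀ v w, G.Adj v w → c v ≠ c w)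
    (hbal : (Finset.univ.filter fun v => c v = true).card =
      (Finset.univ.filter fun v => c v = false).card) :
    (∃ v, G.degree v ≤ 1 ∧ c v = true) ∧ (∃ v, G.degree v ≤ 1 ∧ c v = false) :=
  balanced_tree_has_white_and_black_leaf_general G hconn hacyc c hproper hbal
end

section
/- Let r be the reflection of R^3 in a coordinate plane (p ↦ p − 2(p·w)w for a unit coordinate vector w). For any tiling t of a region R and any u ∈ {±e_x, ±e_y, ±e_z}, the pretwist of the reflected tiling satisfies T^u(r(t)) = −T^u(t). -/
/-!
The reflection `r` in `e_j^⊥` is a linear isometry with `det r = -1`; it maps the cubes of a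
domino `d` to those of `r(d)` with colours exchanged, so `v(r d) = -r (v d)`, and it carries
`r(u)`-shades to `u`-shades. Hence `τ^u(r d₀, r d₁) = -τ^{r u}(d₀, d₁)` and
`T^u(r t) = -T^{r u}(t)`. If `u ⊥ e_j` then `r u = u`. If `u = ±e_j` then `r u = -u`, and
`T^{-u}(t) = T^u(t)`: distinct dominoes of a tiling are boxes with disjoint interiors, so `d₁`
meets the `(-u)`-shade of `d₀` iff `d₀` meets the `u`-shade of `d₁`, while
`det(v₁, v₀, -u) = det(v₀, v₁, u)`.
-/

open scoped Classical

noncomputable section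

/-- The closed unit (basic) cube with minimal corner `x ∈ ℤ³`. -/
def cube (x : Fin 3 → ℤ) : Set (Fin 3 → ℝ) :=
  {p | ∀ i, (x i : ℝ) ≤ p i ∧ p i ≤ (x i : ℝ) + 1}

/-- A domino is encoded as an ordered pair of cells (minimal corners):
first the white cell, then the black cell.  Its underlying point set: -/
def dominoSet (d : (Fin 3 → ℤ) × (Fin 3 → ℤ)) : Set (Fin 3 → ℝ) :=
  cube d.1 ∪ cube d.2

/-- `v(d)`: the vector from the center of the white cube of `d` to the center of
its black cube. -/
def vvec (d : (Fin 3 → ℤ) × (Fin 3 → ℤ)) : Fin 3 → ℝ :=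
  fun i => (d.2 i : ℝ) - (d.1 i : ℝ)

/-- The open `u`-shade of a set `X`: the interior of `(X + [0,∞)·u) \ X`. -/
def shade (u : Fin 3 → ℝ) (X : Set (Fin 3 → ℝ)) : Set (Fin 3 → ℝ) :=
  interior ({p | ∃ x ∈ X, ∃ s : ℝ, 0 ≤ s ∧ p = x + s • u} \ X)

/-- The effect `τ^u(d0,d1)`: `(1/4)·det(v(d1), v(d0), u)` if `d1` meets the open
`u`-shade of `d0`, and `0` otherwise. -/
def effect (u : Fin 3 → ℝ) (d0 d1 : (Fin 3 → ℤ) × (Fin 3 → ℤ)) : ℝ :=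
  if (dominoSet d1 ∩ shade u (dominoSet d0)).Nonempty then
    (1 / 4) * (Matrix.of ![vvec d1, vvec d0, u]).det
  else 0

/-- The `u`-pretwist `T^u(t) = Σ_{d0,d1 ∈ t} τ^u(d0,d1)`. -/
def pretwist (u : Fin 3 → ℝ) (t : Finset ((Fin 3 → ℤ) × (Fin 3 → ℤ))) : ℝ :=
  ∑ d0 ∈ t, ∑ d1 ∈ t, effect u d0 d1

/-- `d` is a domino: its two cells are face-adjacent, the first cell being white
(even coordinate sum) and hence the second black. -/
def IsDomino (d : (Fin 3 → ℤ) × (Fin 3 → ℤ)) : Prop :=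
  (∑ i, |d.1 i - d.2 i|) = 1 ∧ Even (∑ i, d.1 i)

/-- `t` is a tiling of the region `R` (a finite set of cells) by dominoes. -/
def IsTiling (R : Finset (Fin 3 → ℤ)) (t : Finset ((Fin 3 → ℤ) × (Fin 3 → ℤ))) : Prop :=
  (∀ d ∈ t, IsDomino d ∧ d.1 ∈ R ∧ d.2 ∈ R) ∧
  (∀ x ∈ R, ∃! d, d ∈ t ∧ (x = d.1 ∨ x = d.2))


/-- Reflection of a cell in the coordinate plane `w^⊥` where `w = e_j`
(`p ↦ p − 2(p·w)w` on points; on minimal corners of cubes, the `j`-th coordinate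
`x j` becomes `−x j − 1`). -/
def reflCell (j : Fin 3) (x : Fin 3 → ℤ) : Fin 3 → ℤ :=
  Function.update x j (-(x j) - 1)

/-- Reflection of a domino: cells are reflected, and since the reflection exchanges
colors, the white and black cells are swapped. -/
def reflDomino (j : Fin 3) (d : (Fin 3 → ℤ) × (Fin 3 → ℤ)) :
    (Fin 3 → ℤ) × (Fin 3 → ℤ) :=
  (reflCell j d.2, reflCell j d.1)

theorem shade_preimage (e : (Fin 3 → ℝ) ≃L[ℝ] (Fin 3 → ℝ)) (u : Fin 3 → ℝ)
    (X : Set (Fin 3 → ℝ)) : shade u (e ⁻¹' X) = e ⁻¹' shade (e u) X := by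
  have hcone : {p | ∃ x ∈ e ⁻¹' X, ∃ s : ℝ, 0 ≤ s ∧ p = x + s • u} =
      e ⁻¹' {q | ∃ y ∈ X, ∃ s : ℝ, 0 ≤ s ∧ q = y + s • e u} := by
    ext p
    simp only [Set.mem_ofPred_eq, Set.mem_preimage]
    constructor
    · rintro ⟨x, hx, s, hs, rfl⟩
      exact ⟨e x, hx, s, hs, by rw [map_add, map_smul]⟩
    · rintro ⟨y, hy, s, hs, hp⟩
      refine ⟨e.symm y, by simpa using hy, s, hs, e.injective ?_⟩
      rw [hp, map_add, map_smul, e.apply_symm_apply]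
  rw [shade, shade, hcone, ← Set.preimage_sdiff]
  exact (e.toHomeomorph.preimage_interior _).symm

def reflect (j : Fin 3) : (Fin 3 → ℝ) ≃L[ℝ] (Fin 3 → ℝ) :=
  ContinuousLinearEquiv.piCongrRight fun k =>
    if k = j then ContinuousLinearEquiv.neg ℝ else ContinuousLinearEquiv.refl ℝ ℝ

theorem reflect_apply (j : Fin 3) (p : Fin 3 → ℝ) (k : Fin 3) :
    reflect j p k = if k = j then -p k else p k := by
  simp only [reflect, ContinuousLinearEquiv.piCongrRight_apply]
  split_ifs <;> rfl

theorem reflect_reflect (j : Fin 3) (p : Fin 3 → ℝ) : reflect j (reflect j p) = p := by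
  ext k
  simp only [reflect_apply]
  split_ifs <;> simp

theorem reflect_single_self (j : Fin 3) : reflect j (Pi.single j 1) = -Pi.single j 1 := by
  ext k
  rw [reflect_apply]
  split_ifs with h
  · rfl
  · simp [h]

theorem reflect_single_of_ne {i j : Fin 3} (hij : i ≠ j) :
    reflect j (Pi.single i 1) = Pi.single i 1 := by
  ext k
  rw [reflect_apply]
  split_ifs with h
  · subst h; simp [hij.symm]
  · rfl

theorem det_reflect (j : Fin 3) (a b c : Fin 3 → ℝ) :
    (Matrix.of ![reflect j a, reflect j b, reflect j c]).det =
      -(Matrix.of ![a, b, c]).det := by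
  fin_cases j <;> simp [Matrix.det_fin_three, reflect_apply] <;> ring

theorem det_of_neg_neg (a b c : Fin 3 → ℝ) :
    (Matrix.of ![-a, -b, c]).det = (Matrix.of ![a, b, c]).det := by
  simp [Matrix.det_fin_three]

theorem det_of_swap_neg (a b c : Fin 3 → ℝ) :
    (Matrix.of ![a, b, -c]).det = (Matrix.of ![b, a, c]).det := by
  simp [Matrix.det_fin_three]; ring

theorem preimage_reflect_cube (j : Fin 3) (x : Fin 3 → ℤ) :
    reflect j ⁻¹' cube x = cube (reflCell j x) := by
  ext p
  simp only [cube, Set.mem_preimage, Set.mem_ofPred_eq, reflect_apply, reflCell,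
    Function.update_apply]
  refine forall_congr' fun k => ?_
  split_ifs with h
  · subst h; push_cast; constructor <;> rintro ⟨h1, h2⟩ <;> constructor <;> linarith
  · rfl

theorem dominoSet_reflDomino (j : Fin 3) (d : (Fin 3 → ℤ) × (Fin 3 → ℤ)) :
    dominoSet (reflDomino j d) = reflect j ⁻¹' dominoSet d := by
  simp only [dominoSet, reflDomino, Set.preimage_union, preimage_reflect_cube, Set.union_comm]

theorem vvec_reflDomino (j : Fin 3) (d : (Fin 3 → ℤ) × (Fin 3 → ℤ)) :
    vvec (reflDomino j d) = -reflect j (vvec d) := by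
  ext k
  simp only [vvec, reflDomino, reflCell, Function.update_apply, Pi.neg_apply, reflect_apply]
  split_ifs with h
  · subst h; push_cast; ring
  · ring

theorem reflDomino_involutive (j : Fin 3) : Function.Involutive (reflDomino j) := by
  intro d
  ext k <;> simp only [reflDomino, reflCell, Function.update_apply] <;> split_ifs <;> simp_all

theorem effect_reflDomino (j : Fin 3) (u : Fin 3 → ℝ) (d₀ d₁ : (Fin 3 → ℤ) × (Fin 3 → ℤ)) :
    effect u (reflDomino j d₀) (reflDomino j d₁) = -effect (reflect j u) d₀ d₁ := by
  have hmeet : dominoSet (reflDomino j d₁) ∩ shade u (dominoSet (reflDomino j d₀)) =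
      reflect j ⁻¹' (dominoSet d₁ ∩ shade (reflect j u) (dominoSet d₀)) := by
    rw [dominoSet_reflDomino, dominoSet_reflDomino, shade_preimage, Set.preimage_inter]
  have hdet : (Matrix.of ![vvec (reflDomino j d₁), vvec (reflDomino j d₀), u]).det =
      -(Matrix.of ![vvec d₁, vvec d₀, reflect j u]).det := by
    conv_lhs => rw [← reflect_reflect j u]
    rw [vvec_reflDomino, vvec_reflDomino, ← map_neg, ← map_neg, det_reflect, det_of_neg_neg]
  simp only [effect, hmeet, (reflect j).surjective.nonempty_preimage, hdet]
  split_ifs <;> ring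

theorem pretwist_image_reflDomino (j : Fin 3) (u : Fin 3 → ℝ)
    (t : Finset ((Fin 3 → ℤ) × (Fin 3 → ℤ))) :
    pretwist u (t.image (reflDomino j)) = -pretwist (reflect j u) t := by
  have hinj : Set.InjOn (reflDomino j) t := (reflDomino_involutive j).injective.injOn
  simp only [pretwist, Finset.sum_image hinj, effect_reflDomino, Finset.sum_neg_distrib]

theorem add_smul_single_apply (x : Fin 3 → ℝ) (s : ℝ) (i k : Fin 3) :
    (x + s • Pi.single i 1 : Fin 3 → ℝ) k = if k = i then x k + s else x k := by
  by_cases h : k = i <;> simp [h]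

theorem shade_single_Icc (i : Fin 3) {a b : Fin 3 → ℝ} (hab : a ≤ b) :
    shade (Pi.single i 1) (Set.Icc a b) =
      Set.univ.pi fun k => if k = i then Set.Ioi (b i) else Set.Ioo (a k) (b k) := by
  have hcone : {p | ∃ x ∈ Set.Icc a b, ∃ s : ℝ, 0 ≤ s ∧ p = x + s • Pi.single i 1} \
      Set.Icc a b = Set.univ.pi fun k => if k = i then Set.Ioi (b i) else Set.Icc (a k) (b k) := by
    ext p
    simp only [Set.mem_sdiff, Set.mem_ofPred_eq, Set.mem_univ_pi]
    constructor
    · rintro ⟨⟨x, ⟨hax, hxb⟩, s, hs, rfl⟩, hp⟩ k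
      have hother : ∀ k ≠ i, (x + s • Pi.single i 1 : Fin 3 → ℝ) k ∈ Set.Icc (a k) (b k) :=
        fun k hk => by rw [add_smul_single_apply, if_neg hk]; exact ⟨hax k, hxb k⟩
      split_ifs with hk
      · subst hk
        rw [Set.mem_Ioi, add_smul_single_apply, if_pos rfl]
        by_contra! hle
        refine hp ⟨fun m => ?_, fun m => ?_⟩ <;> rcases eq_or_ne m k with rfl | hm
        · rw [add_smul_single_apply, if_pos rfl]; linarith [hax m]
        · exact (hother m hm).1
        · rwa [add_smul_single_apply, if_pos rfl]
        · exact (hother m hm).2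
      · exact hother k hk
    · intro hp
      have hpi : b i < p i := by simpa using hp i
      have hpk : ∀ k ≠ i, p k ∈ Set.Icc (a k) (b k) := fun k hk => by simpa [hk] using hp k
      refine ⟨⟨Function.update p i (b i), ⟨fun k => ?_, fun k => ?_⟩, p i - b i, by linarith,
        ?_⟩, fun hmem => (hmem.2 i).not_gt hpi⟩
      · rcases eq_or_ne k i with rfl | hk
        · simpa using hab k
        · simpa [hk] using (hpk k hk).1
      · rcases eq_or_ne k i with rfl | hk
        · simp
        · simpa [hk] using (hpk k hk).2
      · ext k
        rw [add_smul_single_apply]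
        split_ifs with hk
        · subst hk; simp
        · simp [hk]
  rw [shade, hcone, interior_pi_set Set.finite_univ]
  refine congrArg _ (funext fun k => ?_)
  split_ifs
  · exact interior_Ioi
  · exact interior_Icc

theorem Icc_inter_shade_single_nonempty_iff (i : Fin 3) {a b c d : Fin 3 → ℝ}
    (hab : ∀ k, a k < b k) (hcd : ∀ k, c k < d k) :
    (Set.Icc c d ∩ shade (Pi.single i 1) (Set.Icc a b)).Nonempty ↔
      (∀ k ≠ i, a k < d k ∧ c k < b k) ∧ b i < d i := by
  -- the shade is open, so the closed box `[c, d]` may be replaced by the open one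
  have hclosure : Set.Icc c d = closure (Set.univ.pi fun k => Set.Ioo (c k) (d k)) := by
    simp only [closure_pi_set, closure_Ioo (hcd _).ne, Set.pi_univ_Icc]
  have hopen : IsOpen (Set.univ.pi fun k => if k = i then Set.Ioi (b i) else Set.Ioo (a k) (b k)) :=
    isOpen_set_pi Set.finite_univ fun k _ => by
      split_ifs
      exacts [isOpen_Ioi, isOpen_Ioo]
  rw [shade_single_Icc i fun k => (hab k).le, hclosure, closure_inter_open_nonempty_iff hopen,
    ← Set.pi_inter_distrib, Set.univ_pi_nonempty_iff]
  have hcoord : ∀ k, (Set.Ioo (c k) (d k) ∩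
      if k = i then Set.Ioi (b i) else Set.Ioo (a k) (b k)).Nonempty ↔
        if k = i then b i < d i else a k < d k ∧ c k < b k := fun k => by
    split_ifs with hk
    · subst hk; simp [Set.Ioo_inter_Ioi, hcd k]
    · simp [Set.Ioo_inter_Ioo, hcd k, hab k, and_comm]
  simp only [hcoord]
  constructor
  · intro h
    exact ⟨fun k hk => by simpa [hk] using h k, by simpa using h i⟩
  · rintro ⟨hov, hi⟩ k
    split_ifs with hk
    · exact hk ▸ hi
    · exact hov k hk

theorem Icc_inter_shade_neg_single_nonempty_iff (i : Fin 3) {a b c d : Fin 3 → ℝ}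
    (hab : ∀ k, a k < b k) (hcd : ∀ k, c k < d k) :
    (Set.Icc c d ∩ shade (-Pi.single i 1) (Set.Icc a b)).Nonempty ↔
      (∀ k ≠ i, a k < d k ∧ c k < b k) ∧ c i < a i := by
  let e : (Fin 3 → ℝ) ≃L[ℝ] (Fin 3 → ℝ) := ContinuousLinearEquiv.neg ℝ
  have hIcc : ∀ x y : Fin 3 → ℝ, Set.Icc x y = e ⁻¹' Set.Icc (-y) (-x) := fun x y => by
    ext p; simp [e, and_comm]
  rw [hIcc c d, hIcc a b, shade_preimage, ← Set.preimage_inter, e.surjective.nonempty_preimage,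
    show e (-Pi.single i 1) = Pi.single i 1 by simp [e],
    Icc_inter_shade_single_nonempty_iff (a := -b) (b := -a) (c := -d) (d := -c) i
      (fun k => neg_lt_neg (hab k)) fun k => neg_lt_neg (hcd k)]
  simp only [Pi.neg_apply, neg_lt_neg_iff, and_comm]

/-- `hdisj` says that the open boxes are disjoint. -/
theorem Icc_inter_shade_neg_single_nonempty_iff_swap (i : Fin 3) {a₀ b₀ a₁ b₁ : Fin 3 → ℝ}
    (h₀ : ∀ k, a₀ k < b₀ k) (h₁ : ∀ k, a₁ k < b₁ k)
    (hdisj : ¬ ∀ k, a₀ k < b₁ k ∧ a₁ k < b₀ k) :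
    (Set.Icc a₁ b₁ ∩ shade (-Pi.single i 1) (Set.Icc a₀ b₀)).Nonempty ↔
      (Set.Icc a₀ b₀ ∩ shade (Pi.single i 1) (Set.Icc a₁ b₁)).Nonempty := by
  rw [Icc_inter_shade_neg_single_nonempty_iff i h₀ h₁,
    Icc_inter_shade_single_nonempty_iff i h₁ h₀]
  have hsep : (∀ k ≠ i, a₀ k < b₁ k ∧ a₁ k < b₀ k) → a₀ i < b₁ i → b₀ i ≤ a₁ i :=
    fun hov hlt => not_lt.mp fun hgt => hdisj fun k => by
      rcases eq_or_ne k i with rfl | hk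
      · exact ⟨hlt, hgt⟩
      · exact hov k hk
  constructor
  · rintro ⟨hov, hlt⟩
    refine ⟨fun k hk => (hov k hk).symm, ?_⟩
    rcases lt_or_ge (a₀ i) (b₁ i) with h | h
    · linarith [hsep hov h, h₀ i]
    · linarith [h₀ i]
  · rintro ⟨hov, hlt⟩
    have hov' : ∀ k ≠ i, a₀ k < b₁ k ∧ a₁ k < b₀ k := fun k hk => (hov k hk).symm
    refine ⟨hov', ?_⟩
    rcases lt_or_ge (a₀ i) (b₁ i) with h | h
    · linarith [hsep hov' h, h₁ i]
    · linarith [h₁ i]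

theorem exists_abs_eq_one_of_sum_abs_eq_one {ι : Type*} [Fintype ι] [DecidableEq ι] {z : ι → ℤ}
    (h : ∑ k, |z k| = 1) : ∃ i, |z i| = 1 ∧ ∀ k ≠ i, z k = 0 := by
  obtain ⟨i, -, hi⟩ := Finset.exists_ne_zero_of_sum_ne_zero (h.trans_ne one_ne_zero)
  have hsplit := Finset.add_sum_erase Finset.univ (fun k => |z k|) (Finset.mem_univ i)
  have hone := Int.one_le_abs (abs_ne_zero.mp hi)
  have hrest_nonneg : 0 ≤ ∑ k ∈ Finset.univ.erase i, |z k| :=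
    Finset.sum_nonneg fun _ _ => abs_nonneg _
  have hrest : ∑ k ∈ Finset.univ.erase i, |z k| = 0 := by linarith
  refine ⟨i, by linarith, fun k hk => abs_eq_zero.mp ?_⟩
  exact (Finset.sum_eq_zero_iff_of_nonneg fun _ _ => abs_nonneg _).mp hrest k
    (Finset.mem_erase.mpr ⟨hk, Finset.mem_univ k⟩)

def lowerCorner (d : (Fin 3 → ℤ) × (Fin 3 → ℤ)) : Fin 3 → ℤ := d.1 ⊓ d.2

def upperCorner (d : (Fin 3 → ℤ) × (Fin 3 → ℤ)) : Fin 3 → ℤ := d.1 ⊔ d.2 + 1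

theorem lowerCorner_lt_upperCorner (d : (Fin 3 → ℤ) × (Fin 3 → ℤ)) (k : Fin 3) :
    lowerCorner d k < upperCorner d k := by
  simp only [lowerCorner, upperCorner, Pi.inf_apply, Pi.sup_apply, Pi.add_apply, Pi.one_apply]
  omega

theorem Icc_union_Icc_add_one {a b : ℤ} (hab : |a - b| ≤ 1) :
    Set.Icc (a : ℝ) (a + 1) ∪ Set.Icc (b : ℝ) (b + 1) =
      Set.Icc ((min a b : ℤ) : ℝ) ((max a b + 1 : ℤ) : ℝ) := by
  wlog h : a ≤ b generalizing a b
  · rw [min_comm, max_comm, Set.union_comm]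
    exact this (by rwa [abs_sub_comm]) (le_of_not_ge h)
  have hb : b ≤ a + 1 := by have := abs_sub_le_iff.mp hab; omega
  have h' : (a : ℝ) ≤ b := by exact_mod_cast h
  have hb' : (b : ℝ) ≤ a + 1 := by exact_mod_cast hb
  rw [min_eq_left h, max_eq_right h]
  ext x
  simp only [Set.mem_union, Set.mem_Icc]
  push_cast
  constructor
  · rintro (⟨h₁, h₂⟩ | ⟨h₁, h₂⟩) <;> constructor <;> linarith
  · rintro ⟨h₁, h₂⟩
    rcases le_total x (a + 1) with h₃ | h₃
    exacts [Or.inl ⟨h₁, h₃⟩, Or.inr ⟨by linarith, h₂⟩]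

theorem dominoSet_eq_Icc {d : (Fin 3 → ℤ) × (Fin 3 → ℤ)} (hd : ∑ k, |d.1 k - d.2 k| = 1) :
    dominoSet d = Set.Icc (fun k => (lowerCorner d k : ℝ)) fun k => (upperCorner d k : ℝ) := by
  obtain ⟨i, hi, hother⟩ := exists_abs_eq_one_of_sum_abs_eq_one (z := d.1 - d.2) hd
  simp only [Pi.sub_apply, sub_eq_zero] at hi hother
  have hcoord : ∀ k (p : Fin 3 → ℝ), ((d.1 k : ℝ) ≤ p k ∧ p k ≤ d.1 k + 1) ∨
      ((d.2 k : ℝ) ≤ p k ∧ p k ≤ d.2 k + 1) ↔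
        (lowerCorner d k : ℝ) ≤ p k ∧ p k ≤ upperCorner d k := fun k p => by
    refine Set.ext_iff.mp (Icc_union_Icc_add_one ?_) (p k)
    rcases eq_or_ne k i with rfl | hk
    · exact hi.le
    · simp [hother k hk]
  ext p
  simp only [dominoSet, cube, Set.mem_union, Set.mem_ofPred_eq, Set.mem_Icc, Pi.le_def,
    ← forall_and, ← hcoord]
  refine ⟨fun h k => ?_, fun h => ?_⟩
  · rcases h with h | h
    exacts [Or.inl (h k), Or.inr (h k)]
  · rcases h i with hi₁ | hi₂
    · refine Or.inl fun k => ?_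
      rcases eq_or_ne k i with rfl | hk
      · exact hi₁
      · simpa [hother k hk] using h k
    · refine Or.inr fun k => ?_
      rcases eq_or_ne k i with rfl | hk
      · exact hi₂
      · simpa [hother k hk] using h k

theorem eq_or_eq_of_inf_le_of_le_sup {d : (Fin 3 → ℤ) × (Fin 3 → ℤ)}
    (hd : ∑ k, |d.1 k - d.2 k| = 1) {m : Fin 3 → ℤ} (hlo : d.1 ⊓ d.2 ≤ m) (hhi : m ≤ d.1 ⊔ d.2) :
    m = d.1 ∨ m = d.2 := by
  obtain ⟨i, hi, hother⟩ := exists_abs_eq_one_of_sum_abs_eq_one (z := d.1 - d.2) hd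
  simp only [Pi.sub_apply, sub_eq_zero] at hi hother
  have hlo_i := hlo i
  have hhi_i := hhi i
  simp only [Pi.inf_apply, Pi.sup_apply] at hlo_i hhi_i
  have hm : ∀ k ≠ i, m k = d.1 k ∧ m k = d.2 k := fun k hk => by
    have := hlo k; have := hhi k; have := hother k hk
    simp only [Pi.inf_apply, Pi.sup_apply] at *; omega
  by_cases h : m i = d.1 i
  · left; ext k
    rcases eq_or_ne k i with rfl | hk
    · exact h
    · exact (hm k hk).1
  · right; ext k
    rcases eq_or_ne k i with rfl | hk
    · rcases (abs_eq zero_le_one).mp hi with e | e <;> omega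
    · exact (hm k hk).2

theorem IsTiling.eq_of_forall_lt_upperCorner {R : Finset (Fin 3 → ℤ)}
    {t : Finset ((Fin 3 → ℤ) × (Fin 3 → ℤ))} (ht : IsTiling R t) {d₀ d₁ : (Fin 3 → ℤ) × (Fin 3 → ℤ)}
    (h₀ : d₀ ∈ t) (h₁ : d₁ ∈ t)
    (hov : ∀ k, lowerCorner d₀ k < upperCorner d₁ k ∧ lowerCorner d₁ k < upperCorner d₀ k) :
    d₀ = d₁ := by
  set m := lowerCorner d₀ ⊔ lowerCorner d₁
  have hm₀ : m = d₀.1 ∨ m = d₀.2 := by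
    refine eq_or_eq_of_inf_le_of_le_sup (ht.1 d₀ h₀).1.1 le_sup_left (sup_le ?_ fun k => ?_)
    · exact inf_le_sup
    · exact Int.lt_add_one_iff.mp (hov k).2
  have hm₁ : m = d₁.1 ∨ m = d₁.2 := by
    refine eq_or_eq_of_inf_le_of_le_sup (ht.1 d₁ h₁).1.1 le_sup_right (sup_le (fun k => ?_) ?_)
    · exact Int.lt_add_one_iff.mp (hov k).1
    · exact inf_le_sup
  have hmR : m ∈ R := by
    rcases hm₀ with h | h <;> rw [h]
    exacts [(ht.1 d₀ h₀).2.1, (ht.1 d₀ h₀).2.2]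
  obtain ⟨d, -, hd⟩ := ht.2 m hmR
  exact (hd d₀ ⟨h₀, hm₀⟩).trans (hd d₁ ⟨h₁, hm₁⟩).symm

theorem effect_self (u : Fin 3 → ℝ) (d : (Fin 3 → ℤ) × (Fin 3 → ℤ)) : effect u d d = 0 := by
  rw [effect, Matrix.det_zero_of_row_eq (i := 0) (j := 1) (by decide) rfl]
  simp

theorem IsTiling.effect_neg_single {R : Finset (Fin 3 → ℤ)}
    {t : Finset ((Fin 3 → ℤ) × (Fin 3 → ℤ))} (ht : IsTiling R t) {d₀ d₁ : (Fin 3 → ℤ) × (Fin 3 → ℤ)}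
    (h₀ : d₀ ∈ t) (h₁ : d₁ ∈ t) (i : Fin 3) :
    effect (-Pi.single i 1) d₀ d₁ = effect (Pi.single i 1) d₁ d₀ := by
  rcases eq_or_ne d₀ d₁ with rfl | hne
  · rw [effect_self, effect_self]
  have hdisj : ¬ ∀ k, ((lowerCorner d₀ k : ℤ) : ℝ) < upperCorner d₁ k ∧
      ((lowerCorner d₁ k : ℤ) : ℝ) < upperCorner d₀ k :=
    fun hov => hne (ht.eq_of_forall_lt_upperCorner h₀ h₁ fun k => by exact_mod_cast hov k)
  have hmeet := Icc_inter_shade_neg_single_nonempty_iff_swap i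
    (fun k => Int.cast_lt.mpr (lowerCorner_lt_upperCorner d₀ k))
    (fun k => Int.cast_lt.mpr (lowerCorner_lt_upperCorner d₁ k)) hdisj
  rw [← dominoSet_eq_Icc (ht.1 d₀ h₀).1.1, ← dominoSet_eq_Icc (ht.1 d₁ h₁).1.1] at hmeet
  simp only [effect, hmeet, det_of_swap_neg]

theorem IsTiling.pretwist_neg_single {R : Finset (Fin 3 → ℤ)}
    {t : Finset ((Fin 3 → ℤ) × (Fin 3 → ℤ))} (ht : IsTiling R t) (i : Fin 3) :
    pretwist (-Pi.single i 1) t = pretwist (Pi.single i 1) t := by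
  rw [pretwist, pretwist, Finset.sum_comm]
  exact Finset.sum_congr rfl fun d₀ h₀ => Finset.sum_congr rfl fun d₁ h₁ =>
    ht.effect_neg_single h₁ h₀ i

/-- Let `r` be the reflection of `ℝ³` in a coordinate plane
(`p ↦ p − 2(p·w)w` for a unit coordinate vector `w = e_j`).  For any tiling `t` of a
region `R` and any `u ∈ {±e_x, ±e_y, ±e_z}`, the pretwist of the reflected tiling
satisfies `T^u(r(t)) = −T^u(t)`. -/
theorem pretwist_reflect (R : Finset (Fin 3 → ℤ)) (t : Finset ((Fin 3 → ℤ) × (Fin 3 → ℤ)))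
    (ht : IsTiling R t) (j : Fin 3) (u : Fin 3 → ℝ)
    (hu : ∃ i : Fin 3, u = Pi.single i 1 ∨ u = -Pi.single i 1) :
    pretwist u (t.image (reflDomino j)) = - pretwist u t := by
  obtain ⟨i, hu⟩ := hu
  rw [pretwist_image_reflDomino, neg_inj]
  rcases eq_or_ne i j with rfl | hij
  · rcases hu with rfl | rfl
    · rw [reflect_single_self, ht.pretwist_neg_single]
    · rw [map_neg, reflect_single_self, neg_neg, ht.pretwist_neg_single]
  · rcases hu with rfl | rfl
    · rw [reflect_single_of_ne hij]
    · rw [map_neg, reflect_single_of_ne hij]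

end
end
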